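/- Let μ > 0, x₀ ∈ (0,1), and 0 < ξ ≤ 1/x₀. Define ỹ(t) = (1 − μt) − x₀·(1 − μt)^ξ, and let τ = (1 − x₀^{1/(1−ξ)})/μ if ξ < 1 and τ = 1/μ if ξ ≥ 1. Then ỹ is nonincreasing on [0, τ], so its maximum over [0, τ] equals ỹ(0) = 1 − x₀. -/

import Mathlib

/-!
Substituting `u = 1 - μ t` writes `ỹ(t) = f(u)` with `f u = u - x₀ u ^ ξ`, so it suffices that `f`
is nondecreasing on the range `[1 - μ τ, 1]` of `u`. There `f' u = 1 - x₀ ξ u ^ (ξ - 1) ≥ 0`: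
for `ξ ≥ 1` because `u ^ (ξ - 1) ≤ 1` and `x₀ ξ ≤ 1`; for `ξ < 1` because `u ^ (ξ - 1)` decreases
in `u` and equals `1 / x₀` at the left endpoint `u = x₀ ^ (1 / (1 - ξ))`.
-/

open Set

lemma monotoneOn_sub_mul_rpow {a ξ : ℝ} {D : Set ℝ} (hD : Convex ℝ D)
    (hcont : ContinuousOn (fun u : ℝ => u ^ ξ) D) (hpos : interior D ⊆ Ioi 0)
    (hslope : ∀ u ∈ interior D, a * ξ * u ^ (ξ - 1) ≤ 1) :
    MonotoneOn (fun u : ℝ => u - a * u ^ ξ) D := by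
  have hderiv : ∀ u ∈ interior D,
      HasDerivAt (fun u : ℝ => u - a * u ^ ξ) (1 - a * (ξ * u ^ (ξ - 1))) u := fun u hu =>
    (hasDerivAt_id u).sub ((Real.hasDerivAt_rpow_const (Or.inl (hpos hu).ne')).const_mul a)
  refine monotoneOn_of_deriv_nonneg hD (continuousOn_id.sub (hcont.const_smul a))
    (fun u hu => (hderiv u hu).differentiableAt.differentiableWithinAt) fun u hu => ?_
  rw [(hderiv u hu).deriv]
  linarith [hslope u hu]

lemma monotoneOn_sub_mul_rpow_Icc_zero_one {a ξ : ℝ} (ha : 0 ≤ a) (hξ : 1 ≤ ξ)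
    (haξ : a * ξ ≤ 1) : MonotoneOn (fun u : ℝ => u - a * u ^ ξ) (Icc 0 1) := by
  refine monotoneOn_sub_mul_rpow (convex_Icc 0 1)
    (continuousOn_id.rpow_const fun _ _ => Or.inr (by linarith)) ?_ fun u hu => ?_
  · rw [interior_Icc]
    exact Ioo_subset_Ioi_self
  rw [interior_Icc] at hu
  have hpow : u ^ (ξ - 1) ≤ 1 := Real.rpow_le_one hu.1.le hu.2.le (by linarith)
  calc a * ξ * u ^ (ξ - 1) ≤ a * ξ * 1 := by gcongr
    _ ≤ 1 := by linarith

lemma rpow_one_div_one_sub_rpow_sub_one {a ξ : ℝ} (ha : 0 < a) (hξ : ξ < 1) :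
    (a ^ (1 / (1 - ξ))) ^ (ξ - 1) = a⁻¹ := by
  rw [← Real.rpow_mul ha.le, ← Real.rpow_neg_one]
  congr 1
  field_simp [show (1 : ℝ) - ξ ≠ 0 by linarith]
  ring

lemma monotoneOn_sub_mul_rpow_Ici {a ξ : ℝ} (ha : 0 < a) (hξ : ξ < 1) :
    MonotoneOn (fun u : ℝ => u - a * u ^ ξ) (Ici (a ^ (1 / (1 - ξ)))) := by
  have hc : 0 < a ^ (1 / (1 - ξ)) := Real.rpow_pos_of_pos ha _
  refine monotoneOn_sub_mul_rpow (convex_Ici _)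
    (continuousOn_id.rpow_const fun u hu => Or.inl (hc.trans_le hu).ne') ?_ fun u hu => ?_
  · rw [interior_Ici]
    exact Ioi_subset_Ioi hc.le
  rw [interior_Ici] at hu
  have hpow : u ^ (ξ - 1) ≤ a⁻¹ := by
    rw [← rpow_one_div_one_sub_rpow_sub_one ha hξ]
    exact Real.rpow_le_rpow_of_nonpos hc (le_of_lt hu) (by linarith)
  have hau : a * u ^ (ξ - 1) ≤ 1 := by
    calc a * u ^ (ξ - 1) ≤ a * a⁻¹ := by gcongr
      _ = 1 := mul_inv_cancel₀ ha.ne'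
  have hau0 : 0 ≤ a * u ^ (ξ - 1) := mul_nonneg ha.le (Real.rpow_nonneg (hc.trans hu).le _)
  nlinarith

lemma antitoneOn_comp_one_sub_mul {f : ℝ → ℝ} {D s : Set ℝ} {μ : ℝ} (hf : MonotoneOn f D)
    (hμ : 0 ≤ μ) (hs : MapsTo (fun t => 1 - μ * t) s D) :
    AntitoneOn (fun t => f (1 - μ * t)) s := fun _ ha _ hb hab =>
  hf (hs hb) (hs ha) (sub_le_sub_left (mul_le_mul_of_nonneg_left hab hμ) 1)

theorem stmt_17_general (μ x₀ ξ : ℝ) (hμ : 0 < μ) (hx₀ : x₀ ∈ Set.Ioo (0:ℝ) 1)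
    (hξ : ξ ≤ 1 / x₀)
    (y : ℝ → ℝ) (hy : ∀ t, y t = (1 - μ * t) - x₀ * (1 - μ * t) ^ ξ)
    (τ : ℝ) (hτ : τ = if ξ < 1 then (1 - x₀ ^ (1 / (1 - ξ))) / μ else 1 / μ) :
    AntitoneOn y (Set.Icc 0 τ) ∧
    y 0 = 1 - x₀ ∧
    IsGreatest (y '' Set.Icc 0 τ) (1 - x₀) := by
  obtain ⟨hx0, hx1⟩ := hx₀
  obtain rfl : y = fun t => (1 - μ * t) - x₀ * (1 - μ * t) ^ ξ := funext hy
  have hτ0 : 0 ≤ τ := by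
    rw [hτ]
    split_ifs with h
    · have : x₀ ^ (1 / (1 - ξ)) ≤ 1 :=
        Real.rpow_le_one hx0.le hx1.le (one_div_nonneg.2 (by linarith))
      exact div_nonneg (by linarith) hμ.le
    · positivity
  have hanti : AntitoneOn (fun t => (1 - μ * t) - x₀ * (1 - μ * t) ^ ξ) (Icc 0 τ) := by
    rw [hτ]
    split_ifs with h
    · refine antitoneOn_comp_one_sub_mul (monotoneOn_sub_mul_rpow_Ici hx0 h) hμ.le
        fun t ht => ?_
      have := (le_div_iff₀ hμ).1 ht.2
      exact mem_Ici.2 (by linarith)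
    · have hx₀ξ : x₀ * ξ ≤ 1 := by rwa [le_div_iff₀ hx0, mul_comm] at hξ
      refine antitoneOn_comp_one_sub_mul (monotoneOn_sub_mul_rpow_Icc_zero_one hx0.le
        (not_lt.1 h) hx₀ξ) hμ.le fun t ht => ?_
      have := (le_div_iff₀ hμ).1 ht.2
      constructor <;> nlinarith [ht.1]
  have hy0 : (1 - μ * 0) - x₀ * (1 - μ * 0) ^ ξ = 1 - x₀ := by simp
  refine ⟨hanti, hy0, ?_⟩
  rw [← hy0]
  exact hanti.map_isLeast (isLeast_Icc hτ0)

/-- When `0 < ξ ≤ 1/x₀`, the fraction `ỹ(t) = (1 − μt) − x₀(1 − μt)^ξ` is nonincreasing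
on `[0, τ]` (where `τ` is the first zero of `ỹ`), so its maximum over `[0, τ]` is
`ỹ(0) = 1 − x₀`. -/
theorem stmt_17 (μ x₀ ξ : ℝ) (hμ : 0 < μ) (hx₀ : x₀ ∈ Set.Ioo (0:ℝ) 1)
    (hξ0 : 0 < ξ) (hξ : ξ ≤ 1 / x₀)
    (y : ℝ → ℝ) (hy : ∀ t, y t = (1 - μ * t) - x₀ * (1 - μ * t) ^ ξ)
    (τ : ℝ) (hτ : τ = if ξ < 1 then (1 - x₀ ^ (1 / (1 - ξ))) / μ else 1 / μ) :
    AntitoneOn y (Set.Icc 0 τ) ∧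
    y 0 = 1 - x₀ ∧
    IsGreatest (y '' Set.Icc 0 τ) (1 - x₀) :=
  stmt_17_general μ x₀ ξ hμ hx₀ hξ y hy τ hτ
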